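/- Relation (E2): Let u be a 0-grassmannian affine permutation and let a < b < c < d be integers with c − a ≤ k and d − b ≤ k. Then the composite u·t_{a,c}·t_{c,d}·t_{b,c} is defined if and only if the composite u·t_{b,c}·t_{a,b}·t_{b,d} is defined, and in that case the two resulting affine permutations are equal. -/

import Mathlib

open Function

/-- The affine transposition `t_{a,b}` of period `n`: it exchanges `a + m*n` and
`b + m*n` for every `m : ℤ` and fixes all other integers. -/
def affT (n a b : ℤ) : ℤ → ℤ := fun i =>
  if (i - a) % n = 0 then i - a + b
  else if (i - b) % n = 0 then i - b + a
  else i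

/-- `u` is an affine permutation of period `n`: a bijection of `ℤ` with
`u (i + n) = u i + n` and `∑_{i=1}^{n} u i = n (n+1) / 2`. -/
def IsAffinePerm (n : ℤ) (u : ℤ → ℤ) : Prop :=
  Function.Bijective u ∧ (∀ i : ℤ, u (i + n) = u i + n) ∧
    ∑ i ∈ Finset.Icc (1 : ℤ) n, u i = n * (n + 1) / 2

/-- The operator `t_{a,b}` is defined at `u`:
`u a ≤ 0 < u b` and for every `a < i < b`, either `u i < u a` or `u i > u b`. -/
def DefinedAt (u : ℤ → ℤ) (a b : ℤ) : Prop :=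
  u a ≤ 0 ∧ 0 < u b ∧ ∀ i : ℤ, a < i → i < b → u i < u a ∨ u b < u i

/-- `u` is 0-grassmannian: the positions of the values `1, 2, …, n` under `u`
appear in increasing order, i.e. `u⁻¹ 1 < u⁻¹ 2 < ⋯ < u⁻¹ n`. -/
def IsGrassmannian (n : ℤ) (u : ℤ → ℤ) : Prop :=
  ∀ i j p q : ℤ, 1 ≤ i → i < j → j ≤ n → u p = i → u q = j → p < q

/-- The composite `u · t_{a,b} · t_{c,d}` is defined. -/
def Def2 (n : ℤ) (u : ℤ → ℤ) (a b c d : ℤ) : Prop :=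
  DefinedAt u a b ∧ DefinedAt (u ∘ affT n a b) c d

/-- The composite `u · t_{a₁,b₁} · t_{a₂,b₂} · t_{a₃,b₃}` is defined. -/
def Def3 (n : ℤ) (u : ℤ → ℤ) (a₁ b₁ a₂ b₂ a₃ b₃ : ℤ) : Prop :=
  DefinedAt u a₁ b₁ ∧ DefinedAt (u ∘ affT n a₁ b₁) a₂ b₂ ∧
    DefinedAt ((u ∘ affT n a₁ b₁) ∘ affT n a₂ b₂) a₃ b₃

/-!
If `x`, `y`, `z` lie in pairwise distinct residue classes mod `n`, then `t_{y,z}` conjugates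
`t_{x,y}` into `t_{x,z}`. Since `c - a < n` and `d - b < n`, this applies to `(a, b, c)` and
to `(d, b, c)`, and the two conjugations turn `t_{b,c} t_{a,b} t_{b,d}` into
`t_{a,c} t_{c,d} t_{b,c}`. For definedness, both composites only read `u` and
`v = u · t_{a,c}` on `[a, d]`, either one forces `u b < u a ≤ 0 < u c`, and under these
inequalities their interval conditions imply each other.
-/

namespace Int.ModEq

variable {n a b c : ℤ}

lemma sub_add_modEq (h : a ≡ b [ZMOD n]) (c : ℤ) : a - b + c ≡ c [ZMOD n] := by
  simpa using (h.sub_right b).add_right c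

lemma not_modEq (h : a ≡ b [ZMOD n]) (hbc : ¬ b ≡ c [ZMOD n]) : ¬ a ≡ c [ZMOD n] :=
  fun hac => hbc (h.symm.trans hac)

end Int.ModEq

lemma Int.not_modEq_of_ne {n a b : ℤ} (hne : a ≠ b) (h : a < b + n) (h' : b < a + n) :
    ¬ a ≡ b [ZMOD n] := fun hab => by
  have := Int.eq_zero_of_abs_lt_dvd (Int.modEq_iff_dvd.mp hab)
    (abs_sub_lt_iff.mpr ⟨by omega, by omega⟩)
  omega

section affT

variable {n a b i : ℤ}

lemma affT_apply : affT n a b i =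
    if i ≡ a [ZMOD n] then i - a + b else if i ≡ b [ZMOD n] then i - b + a else i := by
  simp only [affT, Int.modEq_comm (a := i), Int.modEq_iff_dvd, Int.dvd_iff_emod_eq_zero]

lemma affT_of_modEq_left (h : i ≡ a [ZMOD n]) : affT n a b i = i - a + b := by
  rw [affT_apply, if_pos h]

lemma affT_of_modEq_right (ha : ¬ i ≡ a [ZMOD n]) (hb : i ≡ b [ZMOD n]) :
    affT n a b i = i - b + a := by
  rw [affT_apply, if_neg ha, if_pos hb]

lemma affT_of_not_modEq (ha : ¬ i ≡ a [ZMOD n]) (hb : ¬ i ≡ b [ZMOD n]) :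
    affT n a b i = i := by
  rw [affT_apply, if_neg ha, if_neg hb]

lemma affT_apply_left : affT n a b a = b := by
  rw [affT_of_modEq_left Int.ModEq.rfl, sub_self, zero_add]

lemma affT_apply_right (hab : a < b) (hba : b < a + n) : affT n a b b = a := by
  rw [affT_of_modEq_right (Int.not_modEq_of_ne (by omega) (by omega) (by omega)) Int.ModEq.rfl,
    sub_self, zero_add]

lemma affT_eq_self (hab : a < b) (hb : b - n < i) (ha : i < a + n) (hia : i ≠ a) (hib : i ≠ b) :
    affT n a b i = i :=
  affT_of_not_modEq (Int.not_modEq_of_ne hia (by omega) (by omega))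
    (Int.not_modEq_of_ne hib (by omega) (by omega))

end affT

section affT_relations

variable {n a b c : ℤ}

lemma affT_comm (hab : ¬ a ≡ b [ZMOD n]) : affT n a b = affT n b a := by
  funext i
  by_cases ha : i ≡ a [ZMOD n]
  · have hb := ha.not_modEq hab
    rw [affT_of_modEq_left ha, affT_of_modEq_right hb ha]
  · by_cases hb : i ≡ b [ZMOD n]
    · rw [affT_of_modEq_right ha hb, affT_of_modEq_left hb]
    · rw [affT_of_not_modEq ha hb, affT_of_not_modEq hb ha]

lemma affT_involutive (hab : ¬ a ≡ b [ZMOD n]) : Involutive (affT n a b) := by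
  intro i
  by_cases ha : i ≡ a [ZMOD n]
  · have hj := ha.sub_add_modEq b
    rw [affT_of_modEq_left ha, affT_of_modEq_right (hj.not_modEq (mt Int.ModEq.symm hab)) hj]
    ring
  · by_cases hb : i ≡ b [ZMOD n]
    · rw [affT_of_modEq_right ha hb, affT_of_modEq_left (hb.sub_add_modEq a)]
      ring
    · rw [affT_of_not_modEq ha hb, affT_of_not_modEq ha hb]

lemma affT_conj (hab : ¬ a ≡ b [ZMOD n]) (hac : ¬ a ≡ c [ZMOD n])
    (hbc : ¬ b ≡ c [ZMOD n]) :
    affT n b c ∘ affT n a b ∘ affT n b c = affT n a c := by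
  funext i
  simp only [Function.comp_apply]
  have hba : ¬ b ≡ a [ZMOD n] := mt Int.ModEq.symm hab
  have hca : ¬ c ≡ a [ZMOD n] := mt Int.ModEq.symm hac
  have hcb : ¬ c ≡ b [ZMOD n] := mt Int.ModEq.symm hbc
  by_cases ha : i ≡ a [ZMOD n]
  · have hj := ha.sub_add_modEq b
    rw [affT_of_not_modEq (ha.not_modEq hab) (ha.not_modEq hac), affT_of_modEq_left ha,
      affT_of_modEq_left hj, affT_of_modEq_left ha]
    ring
  · by_cases hb : i ≡ b [ZMOD n]
    · have hj := hb.sub_add_modEq c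
      rw [affT_of_modEq_left hb, affT_of_not_modEq (hj.not_modEq hca) (hj.not_modEq hcb),
        affT_of_modEq_right (hj.not_modEq hcb) hj, affT_of_not_modEq ha (hb.not_modEq hbc)]
      ring
    · by_cases hc : i ≡ c [ZMOD n]
      · have hj := hc.sub_add_modEq b
        have hm := hj.sub_add_modEq a
        rw [affT_of_modEq_right hb hc, affT_of_modEq_right (hj.not_modEq hba) hj,
          affT_of_not_modEq (hm.not_modEq hab) (hm.not_modEq hac), affT_of_modEq_right ha hc]
        ring
      · rw [affT_of_not_modEq hb hc, affT_of_not_modEq ha hb, affT_of_not_modEq hb hc,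
          affT_of_not_modEq ha hc]

lemma affT_comp_affT (hab : ¬ a ≡ b [ZMOD n]) (hac : ¬ a ≡ c [ZMOD n])
    (hbc : ¬ b ≡ c [ZMOD n]) : affT n b c ∘ affT n a b = affT n a c ∘ affT n b c := by
  rw [← affT_conj hab hac hbc, Function.comp_assoc, Function.comp_assoc,
    (affT_involutive hbc).comp_self, Function.comp_id]

end affT_relations

lemma affT_relation_E2 {n a b c d : ℤ} (hab : ¬ a ≡ b [ZMOD n]) (hac : ¬ a ≡ c [ZMOD n])
    (hbc : ¬ b ≡ c [ZMOD n]) (hbd : ¬ b ≡ d [ZMOD n]) (hcd : ¬ c ≡ d [ZMOD n]) :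
    affT n a c ∘ affT n c d ∘ affT n b c = affT n b c ∘ affT n a b ∘ affT n b d := by
  have hdb : ¬ d ≡ b [ZMOD n] := mt Int.ModEq.symm hbd
  have hdc : ¬ d ≡ c [ZMOD n] := mt Int.ModEq.symm hcd
  have h := affT_comp_affT hdb hdc hbc
  rw [affT_comm hdb, affT_comm hdc] at h
  calc affT n a c ∘ affT n c d ∘ affT n b c = affT n a c ∘ affT n b c ∘ affT n b d := by
        rw [h]
    _ = affT n b c ∘ affT n a b ∘ affT n b d := by
      rw [← Function.comp_assoc, ← affT_comp_affT hab hac hbc]; rfl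

lemma forall_lt_lt_split {P : ℤ → Prop} {a b c : ℤ} (hab : a < b) (hbc : b < c) :
    (∀ i, a < i → i < c → P i) ↔
      (∀ i, a < i → i < b → P i) ∧ P b ∧ ∀ i, b < i → i < c → P i := by
  refine ⟨fun h => ⟨fun i hi hi' => h i hi (by omega), h b hab hbc,
    fun i hi hi' => h i (by omega) hi'⟩, fun ⟨h₁, h₂, h₃⟩ i hi hi' => ?_⟩
  rcases lt_trichotomy i b with hib | rfl | hib
  exacts [h₁ i hi hib, h₂, h₃ i hib hi']

lemma def3_relation_E2_iff {n : ℤ} (u : ℤ → ℤ) {a b c d : ℤ} (hab : a < b) (hbc : b < c)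
    (hcd : c < d) (hca : c < a + n) (hdb : d < b + n) :
    Def3 n u a c c d b c ↔ Def3 n u b c a b b d := by
  have hw : (u ∘ affT n b c) ∘ affT n a b = (u ∘ affT n a c) ∘ affT n b c := by
    rw [Function.comp_assoc, affT_comp_affT (Int.not_modEq_of_ne (by omega) (by omega) (by omega))
      (Int.not_modEq_of_ne (by omega) (by omega) (by omega))
      (Int.not_modEq_of_ne (by omega) (by omega) (by omega))]
    rfl
  simp only [Def3, hw, DefinedAt, forall_lt_lt_split hbc hcd]
  simp +contextual (disch := omega) only [Function.comp_apply,
    affT_apply_left, affT_apply_right, affT_eq_self]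
  -- Every value is now one of `u`, except those of `u ∘ affT n a c` at `d` and on `(c, d)`.
  constructor
  · rintro ⟨⟨hua, huc, h₁⟩, ⟨-, hvd, h₂⟩, hub, -, h₃⟩
    have hba : u b < u a := by have := h₁ b hab hbc; omega
    refine ⟨⟨hub, huc, fun i hi hi' => ?_⟩,
      ⟨hua, huc, fun i hi hi' => h₁ i hi (by omega)⟩,
      hua, hvd, fun i hi hi' => ?_, Or.inl hba, h₂⟩
    · have := h₁ i (by omega) hi'; have := h₃ i hi hi'; omega
    · have := h₃ i hi hi'; omega
  · rintro ⟨⟨hub, huc, h₁⟩, ⟨hua, -, h₂⟩, -, hvd, h₃, hc, h₄⟩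
    have hba : u b < u a := by omega
    refine ⟨⟨hua, huc,
      (forall_lt_lt_split hab hbc).2 ⟨h₂, Or.inl hba, fun i hi hi' => ?_⟩⟩,
      ⟨hua, hvd, h₄⟩, hub, hvd, fun i hi hi' => ?_⟩
    · have := h₁ i hi hi'; omega
    · have := h₁ i hi hi'; have := h₃ i hi hi'; omega

theorem stmt9_general (k : ℤ) (u : ℤ → ℤ)
    (a b c d : ℤ) (hab : a < b) (hbc : b < c) (hcd : c < d)
    (hca : c - a ≤ k) (hdb : d - b ≤ k) :
    (Def3 (k + 1) u a c c d b c ↔ Def3 (k + 1) u b c a b b d) ∧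
      (Def3 (k + 1) u a c c d b c →
        ((u ∘ affT (k + 1) a c) ∘ affT (k + 1) c d) ∘ affT (k + 1) b c =
          ((u ∘ affT (k + 1) b c) ∘ affT (k + 1) a b) ∘ affT (k + 1) b d) := by
  refine ⟨def3_relation_E2_iff u hab hbc hcd (by omega) (by omega), fun _ => ?_⟩
  have hne {x y : ℤ} (hxy : x < y) (hyx : y - x ≤ k) : ¬ x ≡ y [ZMOD k + 1] :=
    Int.not_modEq_of_ne hxy.ne (by omega) (by omega)
  simp only [Function.comp_assoc]
  rw [affT_relation_E2 (hne hab (by omega)) (hne (hab.trans hbc) hca) (hne hbc (by omega))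
    (hne (hbc.trans hcd) hdb) (hne hcd (by omega))]

theorem stmt9 (k : ℤ) (hk : 1 ≤ k) (u : ℤ → ℤ)
    (hu : IsAffinePerm (k + 1) u) (hg : IsGrassmannian (k + 1) u)
    (a b c d : ℤ) (hab : a < b) (hbc : b < c) (hcd : c < d)
    (hca : c - a ≤ k) (hdb : d - b ≤ k) :
    (Def3 (k + 1) u a c c d b c ↔ Def3 (k + 1) u b c a b b d) ∧
      (Def3 (k + 1) u a c c d b c →
        ((u ∘ affT (k + 1) a c) ∘ affT (k + 1) c d) ∘ affT (k + 1) b c =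
          ((u ∘ affT (k + 1) b c) ∘ affT (k + 1) a b) ∘ affT (k + 1) b d) :=
  stmt9_general k u a b c d hab hbc hcd hca hdb
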